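/- Correctness of the sequential K-permutation generator: for every K : ℕ with K ≥ 1, every list xs : List α with xs.Nodup, and every k ≤ K, the k-th entry of kperms K xs is a permutation of (List.sublistsLen k xs).flatMap List.permutations; that is, the k-th block lists exactly all k-permutations of xs (each ordered arrangement of each k-element sublist, each exactly once). -/
import Mathlib


variable {α : Type*}

def single (x : α) (K : ℕ) : List (List (List α)) :=
  [[[]], [[x]]] ++ List.replicate (K - 1) []

/-- All interleavings of two lists, preserving the relative order of each. -/
def interleave : List α → List α → List (List α)
  | xs, [] => [xs]
  | [], ys => [ys]
  | x :: xs, y :: ys =>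
      (interleave xs (y :: ys)).map (x :: ·) ++ (interleave (x :: xs) ys).map (y :: ·)

/-- Merge: all interleavings of elements of `xss` with elements of `yss`. -/
def merge (xss yss : List (List α)) : List (List α) :=
  xss.flatMap (fun x => yss.flatMap (fun y => interleave x y))

/-- Discrete convolution of two lists of blocks under `merge`. -/
def convolM (xss yss : List (List (List α))) : List (List (List α)) :=
  (List.range xss.length).map (fun k =>
    (List.range (k + 1)).flatMap (fun j => merge (xss.getD (k - j) []) (yss.getD j [])))

/-- Sequential K-permutation generator. -/
def kperms (K : ℕ) : List α → List (List (List α))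
  | [] => [[[]]] ++ List.replicate K []
  | x :: xs => convolM (single x K) (kperms K xs)

lemma interleave_nil_left (y : List α) : interleave [] y = [y] := by
  cases y <;> simp [interleave]

lemma interleave_single (x : α) (t : List α) :
    interleave [x] t = List.permutations'Aux x t := by
  induction t with
  | nil => simp [interleave, List.permutations'Aux]
  | cons y ys ih =>
      simp [interleave, interleave_nil_left, List.permutations'Aux, ih]

lemma merge_nil_left (yss : List (List α)) : merge [] yss = [] := rfl

lemma merge_nilList (yss : List (List α)) : merge [[]] yss = yss := by
  simp [merge, interleave_nil_left]

lemma merge_singleList (x : α) (yss : List (List α)) :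
    merge [[x]] yss = yss.flatMap (List.permutations'Aux x) := by
  simp [merge, interleave_single]

lemma getD_replicate_nil (n i : ℕ) :
    (List.replicate n ([] : List (List α))).getD i [] = [] := by
  induction n generalizing i with
  | zero => simp
  | succ n ih =>
      cases i with
      | zero => simp [List.replicate]
      | succ i => simp only [List.replicate, List.getD_cons_succ]; exact ih i

lemma single_getD_ge (x : α) (K i : ℕ) (hi : 2 ≤ i) :
    (single x K).getD i [] = [] := by
  obtain ⟨j, rfl⟩ : ∃ j, i = j + 2 := ⟨i - 2, by omega⟩
  simp only [single, List.cons_append, List.getD_cons_succ, List.nil_append]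
  exact getD_replicate_nil _ _

lemma convolM_getD (xss yss : List (List (List α))) (k : ℕ) (hk : k < xss.length) :
    (convolM xss yss).getD k [] =
      (List.range (k + 1)).flatMap
        (fun j => merge (xss.getD (k - j) []) (yss.getD j [])) := by
  unfold convolM
  rw [List.getD_eq_getElem _ _ (by simpa using hk)]
  simp

lemma perms_cons_key (x : α) (s : List α) :
    (s.permutations.flatMap (List.permutations'Aux x)).Perm (x :: s).permutations := by
  refine ((List.permutations_perm_permutations' s).flatMap_right _).trans ?_
  have : (x :: s).permutations' = (s.permutations').flatMap (List.permutations'Aux x) := rfl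
  rw [← this]
  exact (List.permutations_perm_permutations' (x :: s)).symm

/-- Correctness of the sequential K-permutation generator: the k-th block lists
exactly all k-permutations of `xs`, each exactly once. -/
theorem kperms_correct (K : ℕ) (hK : 1 ≤ K) (xs : List α) (hxs : xs.Nodup) :
    ∀ k ≤ K,
      ((kperms K xs).getD k []).Perm
        ((List.sublistsLen k xs).flatMap List.permutations) := by
  induction xs with
  | nil =>
      intro k hk
      cases k with
      | zero => simp [kperms]
      | succ k =>
          simp only [kperms, List.cons_append, List.nil_append, List.getD_cons_succ]
          rw [getD_replicate_nil]
          simp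
  | cons x xs ih =>
      intro k hk
      have hxs' : xs.Nodup := hxs.of_cons
      have hlen : k < (single x K).length := by simp [single]; omega
      rw [show kperms K (x :: xs) = convolM (single x K) (kperms K xs) from rfl,
        convolM_getD _ _ _ hlen]
      cases k with
      | zero =>
          rw [show List.range 1 = [0] from rfl]
          simp only [List.flatMap_cons, List.flatMap_nil, List.append_nil, Nat.sub_zero]
          have h0 : (single x K).getD 0 [] = [[]] := rfl
          rw [h0, merge_nilList]
          simpa using ih hxs' 0 (by omega)
      | succ n =>
          -- split range (n+2) = range n ++ [n, n+1]
          have hsplit : List.range (n + 2) = List.range n ++ [n, n + 1] := by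
            rw [List.range_succ, List.range_succ]
            simp
          rw [hsplit, List.flatMap_append]
          have hzero : (List.range n).flatMap
              (fun j => merge ((single x K).getD (n + 1 - j) []) ((kperms K xs).getD j [])) = [] := by
            apply List.flatMap_eq_nil_iff.mpr
            intro j hj
            rw [single_getD_ge x K (n + 1 - j) (by simp at hj; omega), merge_nil_left]
          rw [hzero, List.nil_append]
          simp only [List.flatMap_cons, List.flatMap_nil, List.append_nil]
          have e1 : n + 1 - n = 1 := by omega
          have e0 : n + 1 - (n + 1) = 0 := by omega
          rw [e1, e0]
          have h1 : (single x K).getD 1 [] = [[x]] := by simp [single]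
          have h0 : (single x K).getD 0 [] = [[]] := by simp [single]
          rw [h1, h0, merge_singleList, merge_nilList]
          have ihn := ih hxs' n (by omega)
          have ihn1 := ih hxs' (n + 1) hk
          refine ((ihn.flatMap_right _).append ihn1).trans ?_
          refine (List.Perm.append_right _ (l₁ := ((List.sublistsLen n xs).flatMap List.permutations).flatMap (List.permutations'Aux x)) (l₂ := (List.sublistsLen n xs).flatMap (fun s => (x :: s).permutations)) ?_).trans ?_
          · rw [List.flatMap_assoc]
            exact List.Perm.flatMap_left _ (fun s _ => perms_cons_key x s)
          · refine List.perm_append_comm.trans ?_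
            rw [List.sublistsLen_succ_cons, List.flatMap_append, List.flatMap_map]
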